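/- arXiv:1012.4303 — 2 statements merged into one kernel-verified Lean document; each statement's English description precedes it below -/
import Mathlib

section
/- Let μ be a stationary probability measure for the kernel p(x,A) = (1/(2ε)) m(A ∩ B_ε(τ(x))) on the circle, with density ρ with respect to Lebesgue measure m. Then for m-almost every x₀, ρ(x₀) ≤ (1/(4ε²)) · sup over z in S of m(B_ε(z) ∩ τ⁻¹(B_ε(x₀))). -/
open MeasureTheory Set ENNReal

/-- If `μ` is stationary for the kernel `p(x,A) = (1/(2ε)) m(A ∩ B_ε(τ x))`
with density `ρ` w.r.t. Lebesgue measure, then for a.e. `x₀`,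
`ρ(x₀) ≤ (1/(4ε²)) · sup_z m(B_ε(z) ∩ τ⁻¹ B_ε(x₀))`. -/
theorem density_upper_bound (ε : ℝ) (hε : 0 < ε)
    (τ : UnitAddCircle → UnitAddCircle) (hτ : Measurable τ)
    (μ : Measure UnitAddCircle) (hprob : IsProbabilityMeasure μ)
    (ρ : UnitAddCircle → ℝ≥0∞) (hρmeas : Measurable ρ)
    (hdens : μ = (volume : Measure UnitAddCircle).withDensity ρ)
    (hstat : ∀ A : Set UnitAddCircle, MeasurableSet A →
      μ A = ∫⁻ x, ENNReal.ofReal (1/(2*ε)) * volume (A ∩ Metric.closedBall (τ x) ε) ∂μ) :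
    ∀ᵐ x₀ ∂(volume : Measure UnitAddCircle),
      ρ x₀ ≤ ENNReal.ofReal (1/(4*ε^2)) *
        ⨆ z : UnitAddCircle, volume (Metric.closedBall z ε ∩ τ ⁻¹' Metric.closedBall x₀ ε) := by
  set c : ℝ≥0∞ := ENNReal.ofReal (1/(2*ε)) with hc
  -- measurability of y ↦ μ (τ⁻¹ B_ε(y))
  have hSmeas : MeasurableSet {p : UnitAddCircle × UnitAddCircle | dist (τ p.2) p.1 ≤ ε} := by
    have : Measurable fun p : UnitAddCircle × UnitAddCircle => dist (τ p.2) p.1 :=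
      (hτ.comp measurable_snd).dist measurable_fst
    exact measurableSet_le this measurable_const
  have hμball : Measurable fun y : UnitAddCircle => μ (τ ⁻¹' Metric.closedBall y ε) := by
    have heq : ∀ y, μ (τ ⁻¹' Metric.closedBall y ε) =
        ∫⁻ x, ({p : UnitAddCircle × UnitAddCircle | dist (τ p.2) p.1 ≤ ε}.indicator 1) (y, x) ∂μ := by
      intro y
      rw [← lintegral_indicator_one (hτ measurableSet_closedBall)]
      refine lintegral_congr fun x => ?_
      simp [Set.indicator, Set.mem_preimage, Metric.mem_closedBall]
    simp only [heq]
    exact Measurable.lintegral_prod_right (measurable_one.indicator hSmeas)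
  set g : UnitAddCircle → ℝ≥0∞ := fun y => c * μ (τ ⁻¹' Metric.closedBall y ε) with hg
  have hgmeas : Measurable g := hμball.const_mul c
  -- key: μ = volume.withDensity g
  have hkey : (volume : Measure UnitAddCircle).withDensity g = μ := by
    ext A hA
    rw [withDensity_apply _ hA, hstat A hA]
    have hFmeas : MeasurableSet {p : UnitAddCircle × UnitAddCircle |
        p.2 ∈ A ∧ dist p.2 (τ p.1) ≤ ε} := by
      have h2 : Measurable fun p : UnitAddCircle × UnitAddCircle => dist p.2 (τ p.1) :=
        measurable_snd.dist (hτ.comp measurable_fst)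
      exact (measurable_snd hA).inter (measurableSet_le h2 measurable_const)
    have step1 : ∀ x, volume (A ∩ Metric.closedBall (τ x) ε) =
        ∫⁻ y, ({p : UnitAddCircle × UnitAddCircle |
          p.2 ∈ A ∧ dist p.2 (τ p.1) ≤ ε}.indicator 1) (x, y) ∂volume := by
      intro x
      rw [← lintegral_indicator_one (hA.inter measurableSet_closedBall)]
      refine lintegral_congr fun y => ?_
      by_cases hy : y ∈ A ∩ Metric.closedBall (τ x) ε
      · rw [Set.indicator_of_mem hy, Set.indicator_of_mem
          (by simpa [Set.mem_inter_iff, Metric.mem_closedBall] using hy)]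
        rfl
      · rw [Set.indicator_of_notMem hy, Set.indicator_of_notMem
          (by simpa [Set.mem_inter_iff, Metric.mem_closedBall] using hy)]
    symm
    calc ∫⁻ x, c * volume (A ∩ Metric.closedBall (τ x) ε) ∂μ
        = c * ∫⁻ x, ∫⁻ y, ({p : UnitAddCircle × UnitAddCircle |
            p.2 ∈ A ∧ dist p.2 (τ p.1) ≤ ε}.indicator 1) (x, y) ∂volume ∂μ := by
          simp only [step1]
          rw [lintegral_const_mul]
          exact Measurable.lintegral_prod_right (measurable_one.indicator hFmeas)
      _ = c * ∫⁻ y, ∫⁻ x, ({p : UnitAddCircle × UnitAddCircle |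
            p.2 ∈ A ∧ dist p.2 (τ p.1) ≤ ε}.indicator 1) (x, y) ∂μ ∂volume := by
          rw [lintegral_lintegral_swap]
          exact (measurable_one.indicator hFmeas).aemeasurable
      _ = c * ∫⁻ y, A.indicator (fun y => μ (τ ⁻¹' Metric.closedBall y ε)) y ∂volume := by
          congr 1
          refine lintegral_congr fun y => ?_
          by_cases hy : y ∈ A
          · rw [Set.indicator_of_mem hy]
            rw [← lintegral_indicator_one (hτ measurableSet_closedBall)]
            refine lintegral_congr fun x => ?_
            simp only [Set.indicator, Set.mem_setOf_eq, Set.mem_preimage,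
              Metric.mem_closedBall, hy, true_and, Pi.one_apply]
            rw [dist_comm]
          · rw [Set.indicator_of_notMem hy]
            simp only [Set.indicator, Set.mem_setOf_eq, hy, false_and, if_false]
            simp
      _ = ∫⁻ y in A, g y ∂volume := by
          rw [← lintegral_indicator hA, ← lintegral_const_mul c (hμball.indicator hA)]
          refine lintegral_congr fun y => ?_
          by_cases hy : y ∈ A <;> simp [hg, Set.indicator, hy]
  -- hence ρ = g a.e.
  have hae : ρ =ᵐ[(volume : Measure UnitAddCircle)] g := by
    refine (withDensity_eq_iff_of_sigmaFinite hρmeas.aemeasurable hgmeas.aemeasurable).mp ?_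
    rw [← hdens, hkey]
  filter_upwards [hae] with x₀ hx₀
  rw [hx₀]
  set A₀ : Set UnitAddCircle := τ ⁻¹' Metric.closedBall x₀ ε with hA₀
  have hA₀meas : MeasurableSet A₀ := hτ measurableSet_closedBall
  set S : ℝ≥0∞ := ⨆ z : UnitAddCircle, volume (Metric.closedBall z ε ∩ A₀) with hS
  have hμA₀ : μ A₀ ≤ c * S := by
    rw [hstat A₀ hA₀meas]
    calc ∫⁻ x, c * volume (A₀ ∩ Metric.closedBall (τ x) ε) ∂μ
        ≤ ∫⁻ _x, c * S ∂μ := by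
          refine lintegral_mono fun x => ?_
          gcongr
          rw [Set.inter_comm]
          exact le_iSup (fun z => volume (Metric.closedBall z ε ∩ A₀)) (τ x)
      _ = c * S := by simp [lintegral_const, measure_univ]
  calc g x₀ = c * μ A₀ := rfl
    _ ≤ c * (c * S) := by gcongr
    _ = (c * c) * S := by ring
    _ = ENNReal.ofReal (1/(4*ε^2)) * S := by
        congr 1
        rw [hc, ← ENNReal.ofReal_mul (by positivity)]
        congr 1
        field_simp
        ring
end

section
/- There exists a constant C > 0 (depending only on ψ) such that for all sufficiently large L > 0, the integral ∫_{I₁} log|τ_a'| dm ≥ -C/L, where I₁ = {x : |τ_a'(x)| ≤ 1}. -/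
/-
Write `φ = ψ'`. Near a zero `c` of `φ`, strict differentiability with `φ'(c) ≠ 0` makes `φ`
expand distances by at least `|φ'(c)|/2`, and away from the zeros `|φ|` is bounded below;
by compactness of the period, `{x : φ x ∈ [a, b]}` has measure `O(b - a)` for `a, b` near `0`.
Since `|1 + Lφ| < ε` confines `φ` to an interval of length `2ε/L` near `-1/L`, the set of `I₁`
where `-log |τ_a'| > t` has measure `O(e^{-t}/L)`, and the layer-cake formula gives
`∫_{I₁} -log |τ_a'| ≤ ∫₀^∞ O(e^{-t}/L) dt = O(1/L)`.
-/

open MeasureTheory Set Metric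

theorem Function.Periodic.deriv {𝕜 F : Type*} [NontriviallyNormedField 𝕜] [NormedAddCommGroup F]
    [NormedSpace 𝕜 F] {f : 𝕜 → F} {c : 𝕜} (h : Function.Periodic f c) :
    Function.Periodic (deriv f) c := fun x => by
  rw [← deriv_comp_add_const, funext h]

theorem HasStrictDerivAt.exists_mul_abs_sub_le {φ : ℝ → ℝ} {φ' z ρ : ℝ}
    (h : HasStrictDerivAt φ φ' z) (hρ : ρ < |φ'|) :
    ∃ r > 0, ∀ x ∈ ball z r, ∀ y ∈ ball z r, ρ * |x - y| ≤ |φ x - φ y| := by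
  have hlo := (hasDerivAtFilter_iff_isLittleO.mp h).def (sub_pos.2 hρ)
  obtain ⟨r, hr, hball⟩ := eventually_nhds_iff_ball.mp hlo
  refine ⟨r, hr, fun x hx y hy => ?_⟩
  have hxy := hball (x, y) (by rw [← ball_prod_same]; exact ⟨hx, hy⟩)
  simp only [Real.norm_eq_abs, smul_eq_mul] at hxy
  have := abs_sub_abs_le_abs_sub ((x - y) * φ') (φ x - φ y)
  rw [abs_sub_comm ((x - y) * φ'), abs_mul] at this
  nlinarith [abs_nonneg (x - y)]

theorem volume_inter_preimage_Icc_le {φ : ℝ → ℝ} {A : Set ℝ} {ρ : ℝ} (hρ : 0 < ρ)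
    (hA : ∀ x ∈ A, ∀ y ∈ A, ρ * |x - y| ≤ |φ x - φ y|) (a b : ℝ) :
    volume (A ∩ φ ⁻¹' Icc a b) ≤ ENNReal.ofReal ((b - a) / ρ) := by
  refine (Real.volume_le_diam _).trans (ediam_le fun x hx y hy => ?_)
  rw [edist_dist, Real.dist_eq]
  refine ENNReal.ofReal_le_ofReal ((le_div_iff₀ hρ).2 ?_)
  have hφ : |φ x - φ y| ≤ b - a := abs_sub_le_iff.2
    ⟨by linarith [hx.2.2, hy.2.1], by linarith [hx.2.1, hy.2.2]⟩
  linarith [hA x hx.1 y hy.1]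

theorem exists_volume_preimage_Icc_le {φ : ℝ → ℝ} (hφ : ContDiff ℝ 1 φ) {s : Set ℝ}
    (hs : IsCompact s) (hsimple : ∀ x ∈ s, φ x = 0 → deriv φ x ≠ 0) :
    ∃ K > 0, ∃ δ > 0, ∀ a b, -δ ≤ a → b ≤ δ →
      volume {x ∈ s | φ x ∈ Icc a b} ≤ ENNReal.ofReal (K * (b - a)) := by
  have hρ : ∀ x ∈ s, φ x = 0 → 0 < |deriv φ x| / 2 := fun x hx h0 =>
    half_pos (abs_pos.2 (hsimple x hx h0))
  have hexpand : ∀ x ∈ {x ∈ s | φ x = 0}, ∃ r > 0, ∀ y ∈ ball x r, ∀ y' ∈ ball x r,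
      |deriv φ x| / 2 * |y - y'| ≤ |φ y - φ y'| := fun x hx =>
    (hφ.contDiffAt.hasStrictDerivAt one_ne_zero).exists_mul_abs_sub_le
      (half_lt_self (abs_pos.2 (hsimple x hx.1 hx.2)))
  choose! r hr hlip using hexpand
  obtain ⟨t, hts, hcover⟩ := (hs.inter_right (isClosed_eq hφ.continuous continuous_const))
    |>.elim_nhds_subcover (fun x => ball x (r x)) fun x hx => ball_mem_nhds x (hr x hx)
  obtain ⟨η, hη, hηle⟩ : ∃ η > 0, ∀ x ∈ s \ ⋃ x ∈ t, ball x (r x), η ≤ |φ x| :=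
    (hs.diff (isOpen_biUnion fun x _ => isOpen_ball)).exists_forall_le'
      hφ.continuous.abs.continuousOn fun x hx => abs_pos.2 fun h0 => hx.2 (hcover ⟨hx.1, h0⟩)
  refine ⟨∑ x ∈ t, 2 / |deriv φ x| + 1, by positivity, η / 2, half_pos hη,
    fun a b ha hb => ?_⟩
  rcases lt_or_ge b a with hba | hab
  · simp [Icc_eq_empty_of_lt hba]
  have hsub : {x ∈ s | φ x ∈ Icc a b} ⊆ ⋃ x ∈ t, ball x (r x) ∩ φ ⁻¹' Icc a b := by
    intro x hx
    by_cases hxt : x ∈ ⋃ x ∈ t, ball x (r x)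
    · obtain ⟨y, hy, hxy⟩ := mem_iUnion₂.1 hxt
      exact mem_iUnion₂.2 ⟨y, hy, hxy, hx.2⟩
    · have : |φ x| ≤ η / 2 := abs_le.2 ⟨by linarith [hx.2.1], by linarith [hx.2.2]⟩
      linarith [hηle x ⟨hx.1, hxt⟩]
  calc volume {x ∈ s | φ x ∈ Icc a b}
      ≤ ∑ x ∈ t, volume (ball x (r x) ∩ φ ⁻¹' Icc a b) :=
        (measure_mono hsub).trans (measure_biUnion_finset_le _ _)
    _ ≤ ∑ x ∈ t, ENNReal.ofReal ((b - a) / (|deriv φ x| / 2)) :=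
        Finset.sum_le_sum fun x hx => volume_inter_preimage_Icc_le
          (hρ x (hts x hx).1 (hts x hx).2) (hlip x (hts x hx)) a b
    _ = ENNReal.ofReal ((∑ x ∈ t, 2 / |deriv φ x|) * (b - a)) := by
        rw [Finset.sum_mul, ENNReal.ofReal_sum_of_nonneg fun x _ => by positivity]
        exact Finset.sum_congr rfl fun x _ => by congr 1; ring
    _ ≤ ENNReal.ofReal ((∑ x ∈ t, 2 / |deriv φ x| + 1) * (b - a)) := by
        gcongr
        linarith

theorem neg_le_integral_log_of_measure_lt_le {α : Type*} [MeasurableSpace α] {μ : Measure α}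
    {g : α → ℝ} (hg : AEMeasurable g μ) (hg01 : ∀ᵐ x ∂μ, g x ∈ Icc (0 : ℝ) 1) {M : ℝ}
    (hM : 0 ≤ M) (hsmall : ∀ ε ∈ Ioc (0 : ℝ) 1, μ {x | g x < ε} ≤ ENNReal.ofReal (M * ε)) :
    -M ≤ ∫ x, Real.log (g x) ∂μ := by
  have hnn : 0 ≤ᵐ[μ] fun x => -Real.log (g x) :=
    hg01.mono fun x hx => neg_nonneg.2 (Real.log_nonpos hx.1 hx.2)
  have hmeas : AEMeasurable (fun x => -Real.log (g x)) μ :=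
    (Real.measurable_log.comp_aemeasurable hg).neg
  have hlevel : ∀ t ∈ Ioi (0 : ℝ),
      μ {x | t < -Real.log (g x)} ≤ ENNReal.ofReal (M * Real.exp (-t)) := by
    intro t ht
    refine (measure_mono fun x (hx : t < -Real.log (g x)) => ?_).trans
      (hsmall _ ⟨Real.exp_pos _, Real.exp_le_one_iff.2 (neg_nonpos.2 (le_of_lt ht))⟩)
    rcases le_or_gt (g x) 0 with hx0 | hx0
    · exact hx0.trans_lt (Real.exp_pos _)
    · exact (Real.log_lt_iff_lt_exp hx0).1 (by linarith)
  have hlint : ∫⁻ x, ENNReal.ofReal (-Real.log (g x)) ∂μ ≤ ENNReal.ofReal M :=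
    calc ∫⁻ x, ENNReal.ofReal (-Real.log (g x)) ∂μ
        = ∫⁻ t in Ioi 0, μ {x | t < -Real.log (g x)} :=
          lintegral_eq_lintegral_meas_lt μ hnn hmeas
      _ ≤ ∫⁻ t in Ioi 0, ENNReal.ofReal (M * Real.exp (-t)) :=
          setLIntegral_mono' measurableSet_Ioi hlevel
      _ = ENNReal.ofReal (∫ t in Ioi 0, M * Real.exp (-t)) :=
          (ofReal_integral_eq_lintegral_ofReal ((integrableOn_exp_neg_Ioi 0).const_mul M)
            (ae_of_all _ fun t => by positivity)).symm
      _ = ENNReal.ofReal M := by rw [integral_const_mul, integral_exp_neg_Ioi_zero, mul_one]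
  have hint := integral_eq_lintegral_of_nonneg_ae hnn hmeas.aestronglyMeasurable
  rw [integral_neg] at hint
  linarith [ENNReal.toReal_le_of_le_ofReal hM hlint]

theorem neg_div_le_setIntegral_log_abs_one_add_mul {φ : ℝ → ℝ} (hφ : Measurable φ) {s : Set ℝ}
    (hs : MeasurableSet s) {K δ : ℝ} (hK : 0 ≤ K) (hδ : 0 < δ)
    (hvol : ∀ a b, -δ ≤ a → b ≤ δ →
      volume {x ∈ s | φ x ∈ Icc a b} ≤ ENNReal.ofReal (K * (b - a)))
    {L : ℝ} (hL : 2 / δ ≤ L) :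
    -(2 * K) / L ≤ ∫ x in {x | |1 + L * φ x| ≤ 1} ∩ s, Real.log |1 + L * φ x| := by
  have hL0 : 0 < L := (div_pos two_pos hδ).trans_le hL
  have h2L : 2 / L ≤ δ := (div_le_iff₀ hL0).2 (by rwa [div_le_iff₀ hδ, mul_comm] at hL)
  have hg : Measurable fun x => |1 + L * φ x| := by fun_prop
  have hS : MeasurableSet ({x | |1 + L * φ x| ≤ 1} ∩ s) :=
    (measurableSet_le hg measurable_const).inter hs
  rw [neg_div]
  refine neg_le_integral_log_of_measure_lt_le hg.aemeasurable
    (ae_restrict_of_forall_mem hS fun x hx => ⟨abs_nonneg _, hx.1⟩) (by positivity)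
    fun ε hε => ?_
  rw [Measure.restrict_apply (measurableSet_lt hg measurable_const)]
  calc volume ({x | |1 + L * φ x| < ε} ∩ ({x | |1 + L * φ x| ≤ 1} ∩ s))
      ≤ volume {x ∈ s | φ x ∈ Icc (-(1 + ε) / L) ((ε - 1) / L)} := by
        refine measure_mono fun x ⟨hx, _, hxs⟩ => ⟨hxs, ?_⟩
        obtain ⟨hlo, hhi⟩ := abs_lt.1 (show |1 + L * φ x| < ε from hx)
        constructor
        · rw [div_le_iff₀ hL0]; linarith
        · rw [le_div_iff₀ hL0]; linarith
    _ ≤ ENNReal.ofReal (K * ((ε - 1) / L - -(1 + ε) / L)) := by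
        refine hvol _ _ ?_ ?_
        · rw [neg_div, neg_le_neg_iff]
          exact le_trans (div_le_div_of_nonneg_right (by linarith [hε.2]) hL0.le) h2L
        · exact (div_nonpos_of_nonpos_of_nonneg (by linarith [hε.2]) hL0.le).trans hδ.le
    _ = ENNReal.ofReal (2 * K / L * ε) := by
        congr 1
        field_simp
        ring

theorem log_integral_over_I1_general (ψ : ℝ → ℝ) (hψ : ContDiff ℝ 2 ψ)
    (hper : Function.Periodic ψ 1)
    (N : ℕ) (c : Fin N → ℝ)
    (hcrit : ∀ x ∈ Set.Ico (0:ℝ) 1, deriv ψ x = 0 ↔ ∃ i, c i = x)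
    (hnd : ∀ i, deriv (deriv ψ) (c i) ≠ 0) :
    ∃ C > 0, ∃ L₀ : ℝ, ∀ L ≥ L₀,
      ∫ x in {x : ℝ | |1 + L * deriv ψ x| ≤ 1} ∩ Set.Ico (0:ℝ) 1,
          Real.log |1 + L * deriv ψ x| ∂volume
        ≥ -C / L := by
  have hψ' : ContDiff ℝ 1 (deriv ψ) := hψ.deriv'
  have hsimple_Ico : ∀ x ∈ Ico (0 : ℝ) 1, deriv ψ x = 0 → deriv (deriv ψ) x ≠ 0 :=
    fun x hx h0 => by
      obtain ⟨i, rfl⟩ := (hcrit x hx).1 h0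
      exact hnd i
  have hsimple : ∀ x ∈ Icc (0 : ℝ) 1, deriv ψ x = 0 → deriv (deriv ψ) x ≠ 0 := by
    intro x hx
    rcases hx.2.lt_or_eq with hx1 | rfl
    · exact hsimple_Ico x ⟨hx.1, hx1⟩
    · rw [← zero_add (1 : ℝ), hper.deriv, hper.deriv.deriv]
      exact hsimple_Ico 0 ⟨le_rfl, one_pos⟩
  obtain ⟨K, hK, δ, hδ, hvol⟩ := exists_volume_preimage_Icc_le hψ' isCompact_Icc hsimple
  have hvol_Ico : ∀ a b, -δ ≤ a → b ≤ δ →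
      volume {x ∈ Ico (0 : ℝ) 1 | deriv ψ x ∈ Icc a b} ≤ ENNReal.ofReal (K * (b - a)) :=
    fun a b ha hb => (hvol a b ha hb).trans'
      (measure_mono fun _ ⟨hx, hψx⟩ => ⟨Ico_subset_Icc_self hx, hψx⟩)
  exact ⟨2 * K, by positivity, 2 / δ, fun L hL => neg_div_le_setIntegral_log_abs_one_add_mul
    hψ'.continuous.measurable measurableSet_Ico hK.le hδ hvol_Ico hL⟩

/-- There is a constant `C > 0` (depending only on `ψ`) such that for all
sufficiently large `L`, `∫_{I₁} log|τ_a'| dm ≥ -C/L`, where `τ_a'(x) = 1 + Lψ'(x)` and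
`I₁ = {x : |τ_a'(x)| ≤ 1}` (one period of it). -/
theorem log_integral_over_I1 (ψ : ℝ → ℝ) (hψ : ContDiff ℝ 2 ψ)
    (hper : Function.Periodic ψ 1)
    (N : ℕ) (hN : 0 < N) (c : Fin N → ℝ)
    (hc : ∀ i, c i ∈ Set.Ico (0:ℝ) 1) (hinj : Function.Injective c)
    (hcrit : ∀ x ∈ Set.Ico (0:ℝ) 1, deriv ψ x = 0 ↔ ∃ i, c i = x)
    (hnd : ∀ i, deriv (deriv ψ) (c i) ≠ 0) :
    ∃ C > 0, ∃ L₀ : ℝ, ∀ L ≥ L₀,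
      ∫ x in {x : ℝ | |1 + L * deriv ψ x| ≤ 1} ∩ Set.Ico (0:ℝ) 1,
          Real.log |1 + L * deriv ψ x| ∂volume
        ≥ -C / L :=
  log_integral_over_I1_general ψ hψ hper N c hcrit hnd
end
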